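/- arXiv:math/0408300 — 7 statements merged into one kernel-verified Lean document; each statement's English description precedes it below -/
import Mathlib

section
/- Let A be a nonunital associative ring. If a, b ∈ L(A), then a*b ∈ L(A); that is, [L(A)]² ⊆ L(A). -/
def IsEndomorphicLeft {S : Type*} [Semigroup S] (a : S) : Prop :=
  ∀ x y : S, a * x * a * y = a * x * y

theorem IsEndomorphicLeft.mul {S : Type*} [Semigroup S] {a b : S}
    (ha : IsEndomorphicLeft a) (hb : IsEndomorphicLeft b) : IsEndomorphicLeft (a * b) := by
  intro x y
  calc a * b * x * (a * b) * y = a * (b * x) * a * (b * y) := by simp only [mul_assoc]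
    _ = a * (b * x) * (b * y) := ha (b * x) (b * y)
    _ = a * (b * x * b * y) := by simp only [mul_assoc]
    _ = a * (b * x * y) := by rw [hb x y]
    _ = a * b * x * y := by simp only [mul_assoc]

/-- In a nonunital associative ring `A`, if `a, b` are endomorphic left elements
(`a*x*a*y = a*x*y` for all `x, y`), then so is `a*b`; that is, `[L(A)]² ⊆ L(A)`. -/
theorem stmt_2 {A : Type*} [NonUnitalRing A]
    {L : Set A}
    (hL : L = {a : A | ∀ x y : A, a * x * a * y = a * x * y}) :
    ∀ a ∈ L, ∀ b ∈ L, a * b ∈ L := by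
  subst hL
  exact fun _ ha _ hb => IsEndomorphicLeft.mul ha hb
end

section
/- Let A be a complex algebra, let Ã be its unitization (the minimal unital complex algebra containing A), and let b be an invertible element of Ã. If c ∈ L(A), then the element b*c*b⁻¹ (which lies in A, since A is an ideal of Ã) belongs to L(A). Consequently L(A) = ⋃_{b ∈ G(Ã)} b·L(A)·b⁻¹, where G(Ã) is the group of invertible elements of Ã. -/
/-!
If `c` is a left endomorphic element of `A`, then `c * u * c * v = c * u * v` for `u, v` in the
ideal `A` of `Ã`. For a unit `b` of `Ã` and `x, y ∈ A` put `u = b⁻¹ x b` and `v = b⁻¹ y`; these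
lie in `A` because `A` is an ideal of `Ã`, and
`(b c b⁻¹) x (b c b⁻¹) y = b (c u c v) = b (c u v) = (b c b⁻¹) x y`.
-/

namespace TwoSidedIdeal

variable {R : Type*} [Ring R] (I : TwoSidedIdeal R)

def IsEndomorphicLeftOn (c : R) : Prop :=
  ∀ x ∈ I, ∀ y ∈ I, c * x * c * y = c * x * y

variable {I}

theorem IsEndomorphicLeftOn.units_conj {c : R} (hc : I.IsEndomorphicLeftOn c) (b : Rˣ) :
    I.IsEndomorphicLeftOn (b * c * ↑b⁻¹) := by
  intro x hx y hy
  have hu : ↑b⁻¹ * x * b ∈ I := I.mul_mem_right _ _ (I.mul_mem_left _ _ hx)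
  have hv : ↑b⁻¹ * y ∈ I := I.mul_mem_left _ _ hy
  calc b * c * ↑b⁻¹ * x * (b * c * ↑b⁻¹) * y
      = b * (c * (↑b⁻¹ * x * b) * c * (↑b⁻¹ * y)) := by simp only [mul_assoc]
    _ = b * (c * (↑b⁻¹ * x * b) * (↑b⁻¹ * y)) := by rw [hc _ hu _ hv]
    _ = b * c * ↑b⁻¹ * x * y := by simp only [mul_assoc, Units.mul_inv_cancel_left]

end TwoSidedIdeal

namespace Unitization

variable {R A : Type*}

theorem inr_snd_of_fst_eq_zero [AddZeroClass R] [AddZeroClass A] {x : Unitization R A}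
    (h : x.fst = 0) : (inr x.snd : Unitization R A) = x :=
  Unitization.ext (by rw [fst_inr, h]) rfl

variable [CommRing R] [NonUnitalRing A] [Module R A] [IsScalarTower R A A] [SMulCommClass R A A]

theorem mem_ker_fstHom {x : Unitization R A} :
    x ∈ TwoSidedIdeal.ker (fstHom R A) ↔ x.fst = 0 :=
  TwoSidedIdeal.mem_ker _

theorem isEndomorphicLeftOn_ker_fstHom_inr_iff (a : A) :
    (TwoSidedIdeal.ker (fstHom R A)).IsEndomorphicLeftOn (inr a : Unitization R A) ↔
      ∀ x y : A, a * x * a * y = a * x * y := by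
  constructor
  · intro h x y
    apply inr_injective (R := R)
    simpa only [inr_mul] using
      h (inr x) (mem_ker_fstHom.2 (fst_inr R x)) (inr y) (mem_ker_fstHom.2 (fst_inr R y))
  · intro h x hx y hy
    rw [← inr_snd_of_fst_eq_zero (mem_ker_fstHom.1 hx),
      ← inr_snd_of_fst_eq_zero (mem_ker_fstHom.1 hy)]
    simp only [← inr_mul, h]

theorem exists_inr_eq_units_conj {c : A} (hc : ∀ x y : A, c * x * c * y = c * x * y)
    (b : (Unitization R A)ˣ) :
    ∃ d : A, (∀ x y : A, d * x * d * y = d * x * y) ∧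
      (inr d : Unitization R A) =
        (b : Unitization R A) * inr c * ((b⁻¹ : (Unitization R A)ˣ) : Unitization R A) := by
  have hfst : ((b : Unitization R A) * inr c *
      ((b⁻¹ : (Unitization R A)ˣ) : Unitization R A)).fst = 0 := by simp
  refine ⟨_, (isEndomorphicLeftOn_ker_fstHom_inr_iff (R := R) _).1 ?_,
    inr_snd_of_fst_eq_zero hfst⟩
  rw [inr_snd_of_fst_eq_zero hfst]
  exact ((isEndomorphicLeftOn_ker_fstHom_inr_iff c).2 hc).units_conj b

end Unitization

/-- Let `A` be a complex (not necessarily unital) algebra and `Ã = Unitization ℂ A`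
its unitization. If `b` is invertible in `Ã` and `c ∈ L(A)`, then the element of `A`
corresponding to `b * c * b⁻¹` belongs to `L(A)`; consequently
`L(A) = ⋃_{b ∈ G(Ã)} b · L(A) · b⁻¹`. -/
theorem stmt_3 {A : Type*} [NonUnitalRing A] [Module ℂ A]
    [IsScalarTower ℂ A A] [SMulCommClass ℂ A A]
    {L : Set A}
    (hL : L = {a : A | ∀ x y : A, a * x * a * y = a * x * y}) :
    (∀ (b : (Unitization ℂ A)ˣ) (c : A), c ∈ L →
      ∃ d ∈ L, (Unitization.inr d : Unitization ℂ A) =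
        (b : Unitization ℂ A) * Unitization.inr c * ((b⁻¹ : (Unitization ℂ A)ˣ) : Unitization ℂ A)) ∧
    L = ⋃ b : (Unitization ℂ A)ˣ,
      {a : A | ∃ c ∈ L, (Unitization.inr a : Unitization ℂ A) =
        (b : Unitization ℂ A) * Unitization.inr c * ((b⁻¹ : (Unitization ℂ A)ˣ) : Unitization ℂ A)} := by
  subst hL
  refine ⟨fun b c hc => Unitization.exists_inr_eq_units_conj hc b,
    Set.ext fun a => ⟨fun ha => Set.mem_iUnion.2 ⟨1, a, ha, by simp⟩, ?_⟩⟩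
  rw [Set.mem_iUnion]
  rintro ⟨b, c, hc, hac⟩
  obtain ⟨d, hd, hdc⟩ := Unitization.exists_inr_eq_units_conj hc b
  rwa [Unitization.inr_injective (hac.trans hdc.symm)]
end

section
/- Let A be a complex Banach algebra (not necessarily unital) and a ∈ A. Then a is quasinilpotent (i.e. ‖aⁿ‖^{1/n} → 0 as n → ∞) and a ∈ L(A) if and only if a ∈ N'₃(A), i.e. a*x*y = 0 for all x, y ∈ A. -/
/-!
If `a ∈ L(A)`, then `a * x * aⁿ * y = a * x * y` for every `n ≥ 1`; quasinilpotence forces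
`aⁿ → 0`, so letting `n → ∞` gives `a * x * y = 0`. Conversely, `a * x * y = 0` for all `x, y`
gives `a³ = 0`, and both properties follow at once.
-/

/-- `nupow a n` is the `n`-th power `aⁿ` of `a` in a non-unital ring, for `n ≥ 1`
(with junk value `0` at `n = 0`). -/
def nupow {A : Type*} [NonUnitalRing A] (a : A) : ℕ → A
  | 0 => 0
  | 1 => a
  | (n + 2) => nupow a (n + 1) * a

open Filter Topology

section NonUnitalRing

variable {A : Type*} [NonUnitalRing A] {a : A}

theorem nupow_succ_succ (a : A) (n : ℕ) : nupow a (n + 2) = nupow a (n + 1) * a := rfl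

theorem mul_mul_nupow_succ_mul (hL : ∀ x y : A, a * x * a * y = a * x * y) (x : A) (n : ℕ)
    (z : A) : a * x * nupow a (n + 1) * z = a * x * z := by
  induction n generalizing z with
  | zero => exact hL x z
  | succ n ih =>
    rw [nupow_succ_succ, ← mul_assoc, mul_assoc _ _ z, ih, ← mul_assoc, hL]

theorem nupow_eq_zero_of_mul_mul_eq_zero (h : ∀ x y : A, a * x * y = 0) {n : ℕ} (hn : 3 ≤ n) :
    nupow a n = 0 := by
  induction n, hn using Nat.le_induction with
  | base => exact h a a
  | succ n hn ih =>
    obtain ⟨k, rfl⟩ := Nat.exists_eq_succ_of_ne_zero (by omega : n ≠ 0)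
    rw [nupow_succ_succ, ih, zero_mul]

end NonUnitalRing

theorem tendsto_zero_of_tendsto_rpow_one_div_zero {u : ℕ → ℝ} (hu : ∀ n, 0 ≤ u n)
    (h : Tendsto (fun n : ℕ => u n ^ ((1 : ℝ) / n)) atTop (𝓝 0)) :
    Tendsto u atTop (𝓝 0) := by
  have hle : ∀ᶠ n : ℕ in atTop, u n ≤ (1 / 2 : ℝ) ^ n := by
    filter_upwards [h.eventually (gt_mem_nhds one_half_pos), eventually_ge_atTop 1]
      with n hlt hn
    calc u n = (u n ^ ((1 : ℝ) / n)) ^ n := by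
          rw [one_div, Real.rpow_inv_natCast_pow (hu n) (by omega)]
      _ ≤ (1 / 2 : ℝ) ^ n := pow_le_pow_left₀ (Real.rpow_nonneg (hu n) _) hlt.le n
  exact squeeze_zero' (Eventually.of_forall hu) hle
    (tendsto_pow_atTop_nhds_zero_of_lt_one (by norm_num) (by norm_num))

theorem stmt_6_general {A : Type*} [NonUnitalNormedRing A] (a : A) :
    (Filter.Tendsto (fun n : ℕ => ‖nupow a n‖ ^ ((1 : ℝ) / n)) Filter.atTop (nhds 0) ∧
        (∀ x y : A, a * x * a * y = a * x * y)) ↔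
      ∀ x y : A, a * x * y = 0 := by
  refine ⟨fun ⟨hq, hL⟩ x y => ?_, fun h => ⟨?_, fun x y => by rw [mul_assoc a x a, h, h]⟩⟩
  · have hpow : Tendsto (nupow a) atTop (𝓝 0) := tendsto_zero_iff_norm_tendsto_zero.mpr
      (tendsto_zero_of_tendsto_rpow_one_div_zero (fun _ => norm_nonneg _) hq)
    have hlim : Tendsto (fun n => a * x * nupow a (n + 1) * y) atTop (𝓝 0) := by
      simpa using ((hpow.comp (tendsto_add_atTop_nat 1)).const_mul (a * x)).mul_const y
    simp only [mul_mul_nupow_succ_mul hL] at hlim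
    exact tendsto_nhds_unique tendsto_const_nhds hlim
  · refine tendsto_const_nhds.congr' ?_
    filter_upwards [eventually_ge_atTop 3] with n hn
    rw [nupow_eq_zero_of_mul_mul_eq_zero h hn, norm_zero, Real.zero_rpow (by positivity)]

/-- In a complex (not necessarily unital) Banach algebra `A`, an element `a` is
quasinilpotent (`‖aⁿ‖^(1/n) → 0`) and belongs to `L(A)` if and only if
`a ∈ N'₃(A)`, i.e. `a*x*y = 0` for all `x, y`. -/
theorem stmt_6 {A : Type*} [NonUnitalNormedRing A] [NormedSpace ℂ A]
    [IsScalarTower ℂ A A] [SMulCommClass ℂ A A] [CompleteSpace A] (a : A) :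
    (Filter.Tendsto (fun n : ℕ => ‖nupow a n‖ ^ ((1 : ℝ) / n)) Filter.atTop (nhds 0) ∧
        (∀ x y : A, a * x * a * y = a * x * y)) ↔
      ∀ x y : A, a * x * y = 0 :=
  stmt_6_general a
end

section
/- Let A be a complex normed algebra (not necessarily unital). Then L(A) = A if and only if a*x*y = 0 for all a, x, y ∈ A (i.e. A³ = {0}). -/
def endomorphicLeft (A : Type*) [Mul A] : Set A :=
  {a | ∀ x y : A, a * x * a * y = a * x * y}

theorem endomorphicLeft_eq_univ_of_mul_mul_eq_zero {A : Type*} [Mul A] [Zero A]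
    (h : ∀ a x y : A, a * x * y = 0) : endomorphicLeft A = Set.univ :=
  Set.eq_univ_of_forall fun a x y => by rw [h (a * x) a y, h a x y]

section Field

variable {𝕜 A : Type*} [Field 𝕜] [NonUnitalRing A] [Module 𝕜 A]
  [IsScalarTower 𝕜 A A] [SMulCommClass 𝕜 A A]

theorem smul_mul_smul_mul (c : 𝕜) (a x y : A) :
    c • a * x * (c • a) * y = (c * c) • (a * x * a * y) := by
  simp only [smul_mul_assoc, mul_smul_comm, smul_smul]

/-- Comparing the identity for `a` and for `c • a` gives `(c * c - c) • (a * x * y) = 0`. -/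
theorem mul_mul_eq_zero_of_endomorphicLeft_eq_univ {c : 𝕜} (hc : c * c ≠ c)
    (h : endomorphicLeft A = Set.univ) (a x y : A) : a * x * y = 0 := by
  have ha : a * x * a * y = a * x * y := (h ▸ Set.mem_univ a : a ∈ endomorphicLeft A) x y
  have hca : c • a * x * (c • a) * y = c • a * x * y :=
    (h ▸ Set.mem_univ (c • a) : c • a ∈ endomorphicLeft A) x y
  rw [smul_mul_smul_mul, ha, smul_mul_assoc, smul_mul_assoc] at hca
  have hsub : (c * c - c) • (a * x * y) = 0 := by rw [sub_smul, hca, sub_self]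
  exact (smul_eq_zero.mp hsub).resolve_left (sub_ne_zero.mpr hc)

theorem endomorphicLeft_eq_univ_iff {c : 𝕜} (hc : c * c ≠ c) :
    endomorphicLeft A = Set.univ ↔ ∀ a x y : A, a * x * y = 0 :=
  ⟨mul_mul_eq_zero_of_endomorphicLeft_eq_univ hc, endomorphicLeft_eq_univ_of_mul_mul_eq_zero⟩

end Field

/-- A complex (not necessarily unital) normed algebra `A` satisfies `L(A) = A`
if and only if `a*x*y = 0` for all `a, x, y ∈ A` (i.e. `A³ = {0}`). -/
theorem stmt_7 {A : Type*} [NonUnitalNormedRing A] [NormedSpace ℂ A]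
    [IsScalarTower ℂ A A] [SMulCommClass ℂ A A] :
    {a : A | ∀ x y : A, a * x * a * y = a * x * y} = Set.univ ↔
      ∀ a x y : A, a * x * y = 0 :=
  endomorphicLeft_eq_univ_iff (c := (2 : ℂ)) (by norm_num)
end

section
/- Let A be a (not necessarily unital) normed algebra and suppose a, b ∈ L(A) with a*b = b*a, b³ ≠ a, and a ∈ I(A). Then ‖a − b‖ ≥ 1. -/
/-!
With `d = a - b` and `e = a - b³`: the left-endomorphic identity `b x b y = b x y` makes `b³`
idempotent and gives `a b² y = a b y`, so `d³ y = e y` for every `y`. Since `a` and `b³` are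
commuting idempotents, `e³ = e`, hence `e = d³ (d³ e)`; as `e ≠ 0`, this forces `‖d‖ ≥ 1`.
-/

section NonUnitalRing

variable {A : Type*} [NonUnitalRing A]

lemma isIdempotentElem_mul_self_mul_self {b : A} (hb : ∀ x y : A, b * x * b * y = b * x * y) :
    IsIdempotentElem (b * b * b) := by
  have h4 : b * b * b * b = b * b * b := hb b b
  show b * b * b * (b * b * b) = b * b * b
  simp only [← mul_assoc, h4]

lemma IsIdempotentElem.sub_mul_sub_mul_sub {p q : A} (hp : IsIdempotentElem p)
    (hq : IsIdempotentElem q) (hpq : Commute p q) : (p - q) * ((p - q) * (p - q)) = p - q := by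
  have hpqp : p * q * p = p * q := by rw [mul_assoc, ← hpq.eq, ← mul_assoc, hp.eq]
  have hpqq : p * q * q = p * q := by rw [mul_assoc, hq.eq]
  have expand : (p - q) * ((p - q) * (p - q)) =
      p * p * p - p * p * q - p * q * p + p * q * q - q * p * p + q * p * q + q * q * p
        - q * q * q := by
    noncomm_ring
  simp only [expand, hp.eq, hq.eq, hpqp, hpqq, ← hpq.eq]
  abel

lemma sub_mul_sub_mul_sub_mul_eq {a b : A} (ha : IsIdempotentElem a) (hab : Commute a b)
    (hb : ∀ x y : A, b * x * b * y = b * x * y) (z : A) :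
    (a - b) * ((a - b) * ((a - b) * z)) = (a - b * b * b) * z := by
  have haba : a * b * a = a * b := by rw [mul_assoc, ← hab.eq, ← mul_assoc, ha.eq]
  have hbba : b * b * a = a * b * b := by rw [mul_assoc, ← hab.eq, ← mul_assoc, ← hab.eq]
  -- `a b² z = b a b z = b a z = a b z`
  have habb : a * b * b * z = a * b * z := by rw [hab.eq]; exact hb a z
  have expand : (a - b) * ((a - b) * ((a - b) * z)) =
      a * a * a * z - a * a * b * z - a * b * a * z + a * b * b * z - b * a * a * z
        + b * a * b * z + b * b * a * z - b * b * b * z := by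
    noncomm_ring
  rw [expand, ← hab.eq, haba, hbba, ha.eq, ha.eq, habb]
  noncomm_ring

end NonUnitalRing

lemma norm_iterate_mul_left_le {A : Type*} [NonUnitalSeminormedRing A] (d x : A) (n : ℕ) :
    ‖(d * ·)^[n] x‖ ≤ ‖d‖ ^ n * ‖x‖ := by
  induction n with
  | zero => simp
  | succ n ih =>
    rw [Function.iterate_succ_apply', pow_succ', mul_assoc]
    exact (norm_mul_le _ _).trans (by gcongr)

lemma one_le_norm_of_iterate_mul_left_eq_self {A : Type*} [NonUnitalNormedRing A] {d e : A}
    {n : ℕ} (hn : n ≠ 0) (he : e ≠ 0) (hfix : (d * ·)^[n] e = e) : 1 ≤ ‖d‖ := by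
  by_contra! hd
  have hpow : ‖d‖ ^ n < 1 := pow_lt_one₀ (norm_nonneg d) hd hn
  have hle : ‖e‖ ≤ ‖d‖ ^ n * ‖e‖ := by simpa only [hfix] using norm_iterate_mul_left_le d e n
  nlinarith [norm_pos_iff.mpr he]

theorem stmt_12_general {A : Type*} [NonUnitalNormedRing A] (a b : A)
    (hb : ∀ x y : A, b * x * b * y = b * x * y)
    (hab : a * b = b * a) (hb3 : b * b * b ≠ a) (haI : a * a = a) :
    1 ≤ ‖a - b‖ := by
  have hcube : ∀ z, ((a - b) * ·)^[3] z = (a - b * b * b) * z :=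
    sub_mul_sub_mul_sub_mul_eq haI hab hb
  have htri : (a - b * b * b) * ((a - b * b * b) * (a - b * b * b)) = a - b * b * b :=
    IsIdempotentElem.sub_mul_sub_mul_sub haI (isIdempotentElem_mul_self_mul_self hb)
      ((Commute.mul_right hab hab).mul_right hab)
  refine one_le_norm_of_iterate_mul_left_eq_self (n := 3 + 3) (by norm_num)
    (sub_ne_zero.mpr hb3.symm) ?_
  rw [Function.iterate_add_apply, hcube, hcube, htri]

/-- In a (not necessarily unital) normed algebra `A`, if `a, b ∈ L(A)` commute,
`b³ ≠ a`, and `a` is idempotent, then `‖a − b‖ ≥ 1`. -/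
theorem stmt_12 {A : Type*} [NonUnitalNormedRing A] (a b : A)
    (ha : ∀ x y : A, a * x * a * y = a * x * y)
    (hb : ∀ x y : A, b * x * b * y = b * x * y)
    (hab : a * b = b * a) (hb3 : b * b * b ≠ a) (haI : a * a = a) :
    1 ≤ ‖a - b‖ :=
  stmt_12_general a b hb hab hb3 haI
end

section
/- Let A be a very nice complex Banach algebra (not necessarily unital) and a ∈ L(A). Then a is an isolated point of L(A) (in the norm topology of A) if and only if a lies in the center of A (a*x = x*a for all x ∈ A). -/
/-! In a very nice algebra, `b ∈ L(A)` forces `b * b = b` and `b * x * b = b * x` for all `x`,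
and the latter property already gives `b ∈ L(A)`.

If `a` is central, then for `b ∈ L(A)` the difference `d = b - a` of two commuting idempotents
satisfies `d * d * d = d`, so `‖d‖ ≤ ‖d‖³` and `d = 0` as soon as `‖d‖ < 1`.

Conversely, for every `z` the element `c = z * a - a * z * a` satisfies `a * x * c = 0`,
`c * x * a = c * x` and `c * x * c = 0`, so the whole line `a + ℂ c` lies in `L(A)`. If `a` is
isolated this forces `c = 0`, i.e. `z * a = a * z * a = a * z`. -/

open Filter Topology

section Algebra

variable {A : Type*} [NonUnitalRing A]

theorem add_mul_mul_add_eq_add_mul {e c : A} (he : ∀ x, e * x * e = e * x)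
    (hec : ∀ x, e * x * c = 0) (hce : ∀ x, c * x * e = c * x) (hcc : ∀ x, c * x * c = 0)
    (x : A) : (e + c) * x * (e + c) = (e + c) * x := by
  simp only [add_mul, mul_add, he, hec, hce, hcc, add_zero]

theorem add_sub_mul_mul_mul_add_sub_eq {e : A} (he : ∀ x, e * x * e = e * x) (z x : A) :
    (e + (z * e - e * z * e)) * x * (e + (z * e - e * z * e)) =
      (e + (z * e - e * z * e)) * x := by
  have hce : ∀ x, (z * e - e * z * e) * x * e = (z * e - e * z * e) * x := fun x => by
    have he_right : ∀ u x, u * e * x * e = u * e * x := fun u x => by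
      rw [mul_assoc u e x, mul_assoc u (e * x) e, he]
    rw [sub_mul, sub_mul, he_right, he_right]
  refine add_mul_mul_add_eq_add_mul he (fun x => ?_) hce (fun x => ?_) x
  · rw [mul_sub, ← mul_assoc, ← mul_assoc, ← mul_assoc, he x, sub_self]
  · rw [mul_sub, ← mul_assoc, ← mul_assoc, ← mul_assoc, hce, sub_self]

theorem sub_mul_sub_mul_sub_of_commute {a b : A} (ha : a * a = a) (hb : b * b = b)
    (hab : a * b = b * a) : (b - a) * (b - a) * (b - a) = b - a := by
  have habb : a * b * b = a * b := by rw [mul_assoc, hb]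
  have hab' : a * b * a = a * b := by rw [mul_assoc, ← hab, ← mul_assoc, ha]
  simp only [mul_sub, sub_mul, ha, hb, habb, hab', ← hab]
  abel

end Algebra

theorem eq_zero_of_mul_mul_self_eq_self_of_norm_lt_one {A : Type*} [NonUnitalNormedRing A]
    {d : A} (hd : d * d * d = d) (hnorm : ‖d‖ < 1) : d = 0 := by
  have hle : ‖d‖ ≤ ‖d‖ * ‖d‖ * ‖d‖ :=
    calc ‖d‖ = ‖d * d * d‖ := by rw [hd]
      _ ≤ ‖d * d‖ * ‖d‖ := norm_mul_le _ _
      _ ≤ ‖d‖ * ‖d‖ * ‖d‖ := by gcongr; exact norm_mul_le _ _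
  have : ‖d‖ = 0 := by nlinarith [norm_nonneg d]
  exact norm_eq_zero.mp this

theorem eq_zero_of_forall_add_smul_mem_of_isolated {𝕜 E : Type*} [NontriviallyNormedField 𝕜]
    [NormedAddCommGroup E] [NormedSpace 𝕜 E] {S : Set E} {a c : E}
    (hiso : ∃ ε > (0 : ℝ), ∀ b ∈ S, ‖b - a‖ < ε → b = a)
    (hline : ∀ t : 𝕜, a + t • c ∈ S) :
    c = 0 := by
  obtain ⟨ε, hε, hiso⟩ := hiso
  have hsmall : ∀ᶠ t : 𝕜 in 𝓝 0, t • c ∈ Metric.ball 0 ε :=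
    (continuous_id.smul continuous_const).tendsto' 0 0 (zero_smul 𝕜 c)
      |>.eventually (Metric.ball_mem_nhds 0 hε)
  obtain ⟨t, ht, ht0⟩ :=
    (hsmall.filter_mono (nhdsWithin_le_nhds (s := {0}ᶜ)) |>.and self_mem_nhdsWithin).exists
  have : a + t • c = a := hiso _ (hline t) (by simpa using ht)
  exact (smul_eq_zero.mp (by simpa using this)).resolve_left ht0

theorem stmt_18_general {A : Type*} [NonUnitalNormedRing A] [NormedSpace ℂ A]
    [IsScalarTower ℂ A A] [SMulCommClass ℂ A A]
    (hnice : ∀ a : A, (∀ x y : A, a * x * y = a * x * a * y) →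
      a * a = a ∧ ∀ x : A, a * x = a * x * a)
    {L : Set A}
    (hL : L = {a : A | ∀ x y : A, a * x * a * y = a * x * y})
    (a : A) (haL : a ∈ L) :
    (∃ ε > (0 : ℝ), ∀ b ∈ L, ‖b - a‖ < ε → b = a) ↔
      ∀ x : A, a * x = x * a := by
  subst hL
  obtain ⟨ha2, hax⟩ := hnice a fun x y => (haL x y).symm
  constructor
  · intro hiso z
    have hline : ∀ t : ℂ,
        a + t • (z * a - a * z * a) ∈ {b : A | ∀ x y, b * x * b * y = b * x * y} :=
      fun t x y => by
        have hsmul : t • (z * a - a * z * a) = (t • z) * a - a * (t • z) * a := by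
          rw [smul_sub, smul_mul_assoc, mul_smul_comm, smul_mul_assoc]
        rw [hsmul, add_sub_mul_mul_mul_add_sub_eq (fun x => (hax x).symm)]
    have hc := eq_zero_of_forall_add_smul_mem_of_isolated hiso hline
    rw [hax, ← sub_eq_zero.mp hc]
  · intro hcen
    refine ⟨1, one_pos, fun b hb hnorm => ?_⟩
    have hb2 := (hnice b fun x y => (hb x y).symm).1
    exact sub_eq_zero.mp <| eq_zero_of_mul_mul_self_eq_self_of_norm_lt_one
      (sub_mul_sub_mul_sub_of_commute ha2 hb2 (hcen b)) hnorm

/-- Let `A` be a very nice complex (not necessarily unital) Banach algebra: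
for every `a ∈ A`, if `a*x*y = a*x*a*y` for all `x, y`, then `a² = a` and
`a*x = a*x*a` for all `x`. Then `a ∈ L(A)` is isolated in `L(A)` iff `a` is
central. -/
theorem stmt_18 {A : Type*} [NonUnitalNormedRing A] [NormedSpace ℂ A]
    [IsScalarTower ℂ A A] [SMulCommClass ℂ A A] [CompleteSpace A]
    (hnice : ∀ a : A, (∀ x y : A, a * x * y = a * x * a * y) →
      a * a = a ∧ ∀ x : A, a * x = a * x * a)
    {L : Set A}
    (hL : L = {a : A | ∀ x y : A, a * x * a * y = a * x * y})
    (a : A) (haL : a ∈ L) :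
    (∃ ε > (0 : ℝ), ∀ b ∈ L, ‖b - a‖ < ε → b = a) ↔
      ∀ x : A, a * x = x * a :=
  stmt_18_general hnice hL a haL
end

section
/- Let A be a very nice complex Banach algebra (not necessarily unital) and a ∈ L(A). Then the connected component of a in the subspace L(A) coincides with the connected component of a in the subspace I(A). -/
/-!
Given niceness, `L(A)` is the set of idempotents `e` with `e * x * e = e * x` for all `x`. This set
is closed, and it is relatively open in `I(A)`: if `q` is an idempotent close to such an `e`, then
`z = q * x - q * x * q` satisfies `q * z = z` and `z * q = 0`, whence `e * z = e * z * e =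
e * z * (e - q)` and `‖z‖ = ‖e * z + (q - e) * z‖ ≤ (‖e‖ + 1) * ‖q - e‖ * ‖z‖`, forcing `z = 0`.
A subset that is relatively clopen in `I(A)` contains the connected component in `I(A)` of each of
its points.
-/

open Filter Topology

theorem IsClosed.connectedComponentIn_eq_of_subset {X : Type*} [TopologicalSpace X]
    {S T : Set X} (hS : IsClosed S) (hST : S ⊆ T)
    (hopen : ∀ x ∈ S, ∀ᶠ y in 𝓝 x, y ∈ T → y ∈ S) {a : X} (ha : a ∈ S) :
    connectedComponentIn S a = connectedComponentIn T a := by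
  refine subset_antisymm (connectedComponentIn_mono a hST) ?_
  refine isPreconnected_connectedComponentIn.subset_connectedComponentIn
    (mem_connectedComponentIn (hST ha)) fun z hz => ?_
  by_contra hzS
  set U := {x | ∀ᶠ y in 𝓝 x, y ∈ T → y ∈ S}
  have hcover : connectedComponentIn T a ⊆ U ∪ Sᶜ := fun w _ =>
    (em (w ∈ S)).imp (hopen w) id
  obtain ⟨w, hwC, hwU, hwS⟩ := isPreconnected_connectedComponentIn U Sᶜ
    isOpen_setOfPred_eventually_nhds hS.isOpen_compl hcover
    ⟨a, mem_connectedComponentIn (hST ha), hopen a ha⟩ ⟨z, hz, hzS⟩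
  exact hwS (hwU.self_of_nhds (connectedComponentIn_subset T a hwC))

section NonUnitalNormedRing

variable {A : Type*} [NonUnitalNormedRing A]

theorem mul_mul_eq_of_norm_sub_lt {p q : A} (hp : ∀ w, p * w * p = p * w)
    (hq : IsIdempotentElem q) (hpq : (‖p‖ + 1) * ‖q - p‖ < 1) (x : A) :
    q * x * q = q * x := by
  set z := q * x - q * x * q with hz_def
  have hqz : q * z = z := by simp only [z, mul_sub, ← mul_assoc, hq.eq]
  have hzq : z * q = 0 := by simp only [z, sub_mul, mul_assoc, hq.eq, sub_self]
  clear_value z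
  have hpz : p * z = p * z * (p - q) := by
    rw [mul_sub, mul_assoc p z q, hzq, hp, mul_zero, sub_zero]
  have hbound : ‖z‖ ≤ (‖p‖ + 1) * ‖q - p‖ * ‖z‖ :=
    calc ‖z‖ = ‖p * z + (q - p) * z‖ := by rw [sub_mul, hqz, add_sub_cancel]
      _ ≤ ‖p‖ * ‖z‖ * ‖q - p‖ + ‖q - p‖ * ‖z‖ := by
        refine norm_add_le_of_le ?_ (norm_mul_le _ _)
        rw [hpz, norm_sub_rev q p]
        exact (norm_mul_le _ _).trans (by gcongr; exact norm_mul_le _ _)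
      _ = (‖p‖ + 1) * ‖q - p‖ * ‖z‖ := by ring
  have hz : z = 0 := norm_le_zero_iff.mp (by nlinarith [norm_nonneg z])
  rw [hz_def, sub_eq_zero] at hz
  exact hz.symm

theorem eventually_mul_mul_eq_of_isIdempotentElem {p : A} (hp : ∀ w, p * w * p = p * w) :
    ∀ᶠ q in 𝓝 p, IsIdempotentElem q → ∀ x, q * x * q = q * x := by
  have hpos : (0 : ℝ) < ‖p‖ + 1 := by positivity
  filter_upwards [Metric.ball_mem_nhds p (inv_pos.mpr hpos)] with q hq hidem
  refine mul_mul_eq_of_norm_sub_lt hp hidem ?_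
  rw [Metric.mem_ball, dist_eq_norm] at hq
  simpa only [mul_inv_cancel₀ hpos.ne'] using mul_lt_mul_of_pos_left hq hpos

end NonUnitalNormedRing

theorem stmt_19_general {A : Type*} [NonUnitalNormedRing A]
    (hnice : ∀ a : A, (∀ x y : A, a * x * y = a * x * a * y) →
      a * a = a ∧ ∀ x : A, a * x = a * x * a)
    {L I : Set A}
    (hL : L = {a : A | ∀ x y : A, a * x * a * y = a * x * y})
    (hI : I = {e : A | e * e = e})
    (a : A) (haL : a ∈ L) :
    connectedComponentIn L a = connectedComponentIn I a := by
  subst hI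
  have hmem : ∀ e ∈ L, e * e = e ∧ ∀ x, e * x * e = e * x := fun e he => by
    rw [hL] at he
    exact (hnice e fun x y => (he x y).symm).imp_right fun h x => (h x).symm
  have hclosed : IsClosed L := by
    simp only [hL, Set.ofPred_forall]
    exact isClosed_iInter fun x => isClosed_iInter fun y =>
      isClosed_eq (by fun_prop) (by fun_prop)
  refine hclosed.connectedComponentIn_eq_of_subset (fun e he => (hmem e he).1)
    (fun e he => ?_) haL
  filter_upwards [eventually_mul_mul_eq_of_isIdempotentElem (hmem e he).2] with f hf hfI
  simp only [hL, Set.mem_ofPred_eq, hf hfI, implies_true]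

/-- Let `A` be a very nice complex (not necessarily unital) Banach algebra:
for every `a ∈ A`, if `a*x*y = a*x*a*y` for all `x, y`, then `a² = a` and
`a*x = a*x*a` for all `x`. Then for `a ∈ L(A)`, the connected component of `a`
in the subspace `L(A)` coincides with the connected component of `a` in the
subspace `I(A)` of idempotents. -/
theorem stmt_19 {A : Type*} [NonUnitalNormedRing A] [NormedSpace ℂ A]
    [IsScalarTower ℂ A A] [SMulCommClass ℂ A A] [CompleteSpace A]
    (hnice : ∀ a : A, (∀ x y : A, a * x * y = a * x * a * y) →
      a * a = a ∧ ∀ x : A, a * x = a * x * a)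
    {L I : Set A}
    (hL : L = {a : A | ∀ x y : A, a * x * a * y = a * x * y})
    (hI : I = {e : A | e * e = e})
    (a : A) (haL : a ∈ L) :
    connectedComponentIn L a = connectedComponentIn I a :=
  stmt_19_general hnice hL hI a haL
end
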